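/- arXiv:2505.00633 — 5 statements merged into one kernel-verified Lean document; each statement's English description precedes it below -/
import Mathlib

section
/- Every finite set admits a strongly rigid binary relation, i.e., for every finite set G there exists E ⊆ G × G such that the only map h : G → G satisfying (x,y) ∈ E → (h x, h y) ∈ E is the identity. -/
theorem fin_path_rigid {n : ℕ} (h : Fin n → Fin n)
    (H : ∀ i j : Fin n, (i : ℕ) + 1 = (j : ℕ) → ((h i : ℕ)) + 1 = (h j : ℕ)) : h = id := by
  rcases Nat.eq_zero_or_pos n with hn | hn
  · subst hn; funext x; exact x.elim0
  have key : ∀ k (hk : k < n), ((h ⟨k, hk⟩ : Fin n) : ℕ) = ((h ⟨0, hn⟩ : Fin n) : ℕ) + k := by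
    intro k
    induction k with
    | zero => intro hk; simp
    | succ m ih =>
      intro hk
      have hm : m < n := Nat.lt_of_succ_lt hk
      have := H ⟨m, hm⟩ ⟨m + 1, hk⟩ rfl
      rw [← this, ih hm]; omega
  have h0 : ((h ⟨0, hn⟩ : Fin n) : ℕ) = 0 := by
    have hlast : n - 1 < n := Nat.sub_lt hn Nat.one_pos
    have hk := key (n - 1) hlast
    have hb := (h ⟨n - 1, hlast⟩).isLt
    omega
  funext x
  have hx := key x.val x.isLt
  apply Fin.ext
  simpa [h0] using hx

/-- Every finite set admits a strongly rigid binary relation. -/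
theorem stmt0 (G : Type*) [Finite G] :
    ∃ E : G → G → Prop, ∀ h : G → G, (∀ x y, E x y → E (h x) (h y)) → h = id := by
  obtain ⟨n, ⟨e⟩⟩ := Finite.exists_equiv_fin G
  refine ⟨fun x y => ((e x : ℕ)) + 1 = (e y : ℕ), fun h hh => ?_⟩
  have H : ∀ i j : Fin n, (i : ℕ) + 1 = (j : ℕ) →
      ((e (h (e.symm i)) : ℕ)) + 1 = (e (h (e.symm j)) : ℕ) := by
    intro i j hij
    exact hh (e.symm i) (e.symm j) (by simpa using hij)
  have := fin_path_rigid (fun i => e (h (e.symm i))) H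
  funext x
  have hx := congrFun this (e x)
  simp only [id] at hx ⊢
  have : e (h x) = e x := by simpa using hx
  exact e.injective this
end

section
/- Every countable set admits a strongly rigid binary relation: there exists a relation E on ℕ such that every endomorphism of (ℕ, E) is the identity. -/
/-- Every countable set admits a strongly rigid binary relation:
there is a relation on ℕ whose only endomorphism is the identity. -/
theorem stmt1 :
    ∃ E : ℕ → ℕ → Prop, ∀ h : ℕ → ℕ, (∀ x y, E x y → E (h x) (h y)) → h = id := by
  refine ⟨fun x y => (x = 0 ∧ y = 1) ∨ (x = 0 ∧ y = 2) ∨ (x = 1 ∧ y = 2) ∨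
      (2 ≤ x ∧ y = x + 1), fun h hE => ?_⟩
  have e01 := hE 0 1 (Or.inl ⟨rfl, rfl⟩)
  have e02 := hE 0 2 (Or.inr (Or.inl ⟨rfl, rfl⟩))
  have e12 := hE 1 2 (Or.inr (Or.inr (Or.inl ⟨rfl, rfl⟩)))
  have h0 : h 0 = 0 ∧ h 1 = 1 ∧ h 2 = 2 := by omega
  have key : ∀ n, 2 ≤ n → h n = n := by
    intro n hn
    induction n, hn using Nat.le_induction with
    | base => exact h0.2.2
    | succ n hn ih =>
      have := hE n (n + 1) (Or.inr (Or.inr (Or.inr ⟨hn, rfl⟩)))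
      rw [ih] at this
      omega
  funext x
  rcases Nat.lt_or_ge x 2 with hx | hx
  · interval_cases x
    · exact h0.1
    · exact h0.2.1
  · exact key x hx
end

section
/- Every at most countable set admits a strongly rigid relation. -/
private def natRel (m n : ℕ) : Prop := n = m + 1 ∨ (m = 0 ∧ n = 2)

private lemma natRigid : ∀ h : ℕ → ℕ,
    (∀ x y, natRel x y → natRel (h x) (h y)) → h = id := by
  intro h hp
  have step : ∀ n, h (n+1) = h n + 1 ∨ (h n = 0 ∧ h (n+1) = 2) :=
    fun n => hp n (n+1) (Or.inl rfl)
  rcases step 0 with h1 | ⟨h00, h12⟩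
  · have lin : ∀ n, h n = h 0 + n := by
      intro n; induction n with
      | zero => simp
      | succ k ih =>
        rcases step k with e | ⟨hk0, e2⟩
        · omega
        · have k0 : k = 0 := by omega
          subst k0; omega
    have e02 := hp 0 2 (Or.inr ⟨rfl, rfl⟩)
    have l2 := lin 2
    have h0 : h 0 = 0 := by rcases e02 with a | ⟨a, b⟩ <;> omega
    funext n
    have := lin n
    simp [this, h0]
  · have lin : ∀ n, h (n+1) = n + 2 := by
      intro n; induction n with
      | zero => exact h12
      | succ k ih =>
        rcases step (k+1) with e | ⟨hk0, e2⟩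
        · omega
        · omega
    have e02 := hp 0 2 (Or.inr ⟨rfl, rfl⟩)
    exfalso
    have l1 : h 2 = 3 := lin 1
    rcases e02 with a | ⟨a, b⟩ <;> omega

private lemma finRigid (n : ℕ) : ∀ h : Fin n → Fin n,
    (∀ x y : Fin n, (y : ℕ) = (x : ℕ) + 1 → (h y : ℕ) = (h x : ℕ) + 1) → h = id := by
  intro h hp
  cases n with
  | zero => funext x; exact x.elim0
  | succ m =>
    have key : ∀ k (hk : k < m + 1), (h ⟨k, hk⟩ : ℕ) = (h 0 : ℕ) + k := by
      intro k
      induction k with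
      | zero => intro hk; simp [show (⟨0, hk⟩ : Fin (m+1)) = 0 from rfl]
      | succ k ih =>
        intro hk
        have hk' : k < m + 1 := by omega
        have e := hp ⟨k, hk'⟩ ⟨k+1, hk⟩ rfl
        rw [e, ih hk']
        omega
    have last := key m (by omega)
    have hb : (h ⟨m, by omega⟩ : ℕ) < m + 1 := (h ⟨m, by omega⟩).isLt
    have h00 : (h 0 : ℕ) = 0 := by omega
    funext x
    apply Fin.ext
    have hx := key x.val x.isLt
    rw [Fin.eta] at hx
    simp [hx, h00]

private lemma transfer {A B : Type*} (e : A ≃ B) (R : B → B → Prop)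
    (hR : ∀ g : B → B, (∀ x y, R x y → R (g x) (g y)) → g = id) :
    ∀ h : A → A, (∀ x y, R (e x) (e y) → R (e (h x)) (e (h y))) → h = id := by
  intro h hp
  have hg : (fun b => e (h (e.symm b))) = id := by
    apply hR
    intro x y hxy
    have := hp (e.symm x) (e.symm y) (by simpa using hxy)
    simpa using this
  funext a
  have := congrFun hg (e a)
  simp only [id_eq] at this
  have := congrArg e.symm this
  simpa using this

/-- Every at most countable set admits a strongly rigid relation. -/
theorem stmt2 (G : Type*) [Countable G] :
    ∃ E : G → G → Prop, ∀ h : G → G, (∀ x y, E x y → E (h x) (h y)) → h = id := by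
  rcases finite_or_infinite G with hf | hi
  · obtain ⟨n, ⟨e⟩⟩ := Finite.exists_equiv_fin G
    exact ⟨fun x y => ((e y : ℕ) = (e x : ℕ) + 1),
      transfer e _ (finRigid n)⟩
  · obtain ⟨d⟩ := nonempty_denumerable G
    let e := Denumerable.eqv G
    exact ⟨fun x y => natRel (e x) (e y), transfer e natRel natRigid⟩
end

section
/- Let α be an ordinal (with its usual well-order <) sitting as a subgraph A = α+1 inside a directed graph (G,E) where the only arrows within A are (ξ₁,ξ₂) for ξ₁ < ξ₂, no arrows leave A except possibly from the top element α, and no arrows enter A from outside. Suppose α = ℵ(G∖A) is the Hartogs number of the complement, i.e., there is no injection of α into G∖A, and (G,E) is loop-free. Then every endomorphism h of (G,E) satisfies h(α) = α. -/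
/-!
The top vertex `T` of the copy `A` of `α + 1` is the only vertex of `A` with arrows leaving `A`,
and nothing outside `A` points into `A`. If `h T ∉ A`, every `h ξ` with `ξ < α` that lands in
`A` must be `T`, and two such `ξ` would span a loop; so only `ξ = 0` can land in `A`, and
`β ↦ h (β + 1)` injects `α` into `G ∖ A`, which the Hartogs hypothesis forbids. If `h T ∈ A`,
then all of `A` is mapped into `A`, where `h` is strictly increasing, hence `h ξ ≥ ξ` for all
`ξ ≤ α`, and `h T = T`.
-/

open Function Order

theorem injective_of_rel_of_lt {X G : Type*} [LinearOrder X] {E : G → G → Prop}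
    (hirr : ∀ x, ¬E x x) {f : X → G} (hf : ∀ a b, a < b → E (f a) (f b)) : Injective f :=
  Injective.of_lt_imp_ne fun a b hab heq => hirr _ (heq ▸ hf a b hab)

section OrdinalInGraph

variable {G : Type*} {E : G → G → Prop} {α : Ordinal} {ι : {β : Ordinal // β ≤ α} → G}
  {h : G → G}

theorem apply_top_eq_of_apply_top_mem
    (hwithin : ∀ b₁ b₂ : {β : Ordinal // β ≤ α}, E (ι b₁) (ι b₂) ↔ b₁.1 < b₂.1)
    (henter : ∀ g : G, g ∉ Set.range ι → ∀ b, ¬E g (ι b))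
    (hh : ∀ x y, E x y → E (h x) (h y)) (htop : h (ι ⟨α, le_rfl⟩) ∈ Set.range ι) :
    h (ι ⟨α, le_rfl⟩) = ι ⟨α, le_rfl⟩ := by
  have hmaps : ∀ b, ∃ c, ι c = h (ι b) := by
    intro b
    obtain ⟨c, hc⟩ := htop
    rcases b.2.lt_or_eq with hb | hb
    · by_contra hout
      exact henter _ hout c (hc ▸ hh _ _ ((hwithin b ⟨α, le_rfl⟩).2 hb))
    · obtain rfl : b = ⟨α, le_rfl⟩ := Subtype.ext hb
      exact ⟨c, hc⟩
  choose g hg using hmaps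
  have hg_mono : StrictMono g := fun b₁ b₂ hlt =>
    (hwithin _ _).1 (by rw [hg, hg]; exact hh _ _ ((hwithin b₁ b₂).2 hlt))
  have hg_top : g ⟨α, le_rfl⟩ = ⟨α, le_rfl⟩ :=
    le_antisymm (g ⟨α, le_rfl⟩).2 hg_mono.le_apply
  rw [← hg, hg_top]

theorem exists_injective_of_apply_top_notMem (hirr : ∀ x, ¬E x x)
    (hwithin : ∀ b₁ b₂ : {β : Ordinal // β ≤ α}, E (ι b₁) (ι b₂) ↔ b₁.1 < b₂.1)
    (hleave : ∀ b : {β : Ordinal // β ≤ α}, b.1 ≠ α → ∀ g : G, E (ι b) g → g ∈ Set.range ι)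
    (henter : ∀ g : G, g ∉ Set.range ι → ∀ b, ¬E g (ι b))
    (hh : ∀ x y, E x y → E (h x) (h y)) (htop : h (ι ⟨α, le_rfl⟩) ∉ Set.range ι) :
    ∃ f : {β : Ordinal // β < α} → {g : G // g ∉ Set.range ι}, Injective f := by
  have hE : ∀ b₁ b₂ : {β : Ordinal // β ≤ α}, b₁ < b₂ → E (h (ι b₁)) (h (ι b₂)) :=
    fun b₁ b₂ hlt => hh _ _ ((hwithin b₁ b₂).2 hlt)
  have heq_top : ∀ b : {β : Ordinal // β ≤ α}, b.1 < α → h (ι b) ∈ Set.range ι →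
      h (ι b) = ι ⟨α, le_rfl⟩ := by
    rintro b hb ⟨c, hc⟩
    rcases eq_or_ne c.1 α with hcα | hcα
    · obtain rfl : c = ⟨α, le_rfl⟩ := Subtype.ext hcα
      exact hc.symm
    · exact absurd (hleave c hcα _ (hc ▸ hE b ⟨α, le_rfl⟩ hb)) htop
  have hnotMem : ∀ b : {β : Ordinal // β ≤ α}, 0 < b.1 → h (ι b) ∉ Set.range ι := by
    intro b hb hmem
    rcases b.2.lt_or_eq with hbα | hbα
    · have h₀ : (0 : Ordinal) ≤ α := zero_le
      have hmem₀ : h (ι ⟨0, h₀⟩) ∈ Set.range ι := by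
        by_contra hout
        exact henter _ hout _ ((heq_top b hbα hmem) ▸ hE ⟨0, h₀⟩ b hb)
      have hloop := hE ⟨0, h₀⟩ b hb
      rw [heq_top b hbα hmem, heq_top _ (hb.trans hbα) hmem₀] at hloop
      exact hirr _ hloop
    · obtain rfl : b = ⟨α, le_rfl⟩ := Subtype.ext hbα
      exact htop hmem
  have hinj : Injective (h ∘ ι) := injective_of_rel_of_lt hirr hE
  refine ⟨fun β => ⟨h (ι ⟨succ β.1, succ_le_of_lt β.2⟩),
    hnotMem _ (bot_lt_succ β.1)⟩, fun β₁ β₂ heq => ?_⟩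
  exact Subtype.ext (succ_injective (congrArg Subtype.val (hinj (congrArg Subtype.val heq))))

end OrdinalInGraph

theorem stmt16_general (G : Type*) (E : G → G → Prop) (hirr : ∀ x, ¬E x x)
    (α : Ordinal) (ι : {β : Ordinal // β ≤ α} → G)
    (A : Set G) (hA : A = Set.range ι)
    (hwithin : ∀ b₁ b₂ : {β : Ordinal // β ≤ α}, E (ι b₁) (ι b₂) ↔ b₁.1 < b₂.1)
    (hleave : ∀ b : {β : Ordinal // β ≤ α}, b.1 ≠ α → ∀ g : G, E (ι b) g → g ∈ A)
    (henter : ∀ g : G, g ∉ A → ∀ b : {β : Ordinal // β ≤ α}, ¬E g (ι b))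
    (hHartogs : ¬∃ f : {β : Ordinal // β < α} → {g : G // g ∉ A}, Function.Injective f)
    (h : G → G) (hh : ∀ x y, E x y → E (h x) (h y)) :
    h (ι ⟨α, le_refl α⟩) = ι ⟨α, le_refl α⟩ := by
  subst hA
  by_cases htop : h (ι ⟨α, le_refl α⟩) ∈ Set.range ι
  · exact apply_top_eq_of_apply_top_mem hwithin henter hh htop
  · exact (hHartogs
      (exists_injective_of_apply_top_notMem hirr hwithin hleave henter hh htop)).elim

/-- If the copy `A` of `α + 1` sits inside a loop-free graph `(G,E)` with arrows within `A`
exactly the order, no arrows leaving `A` except possibly from the top element, no arrows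
entering `A` from outside, and `α` is the Hartogs number of `G ∖ A` (no injection of `α`
into `G ∖ A`), then every endomorphism fixes the top vertex. -/
theorem stmt16 (G : Type*) (E : G → G → Prop) (hirr : ∀ x, ¬E x x)
    (α : Ordinal) (ι : {β : Ordinal // β ≤ α} → G) (hι : Function.Injective ι)
    (A : Set G) (hA : A = Set.range ι)
    (hwithin : ∀ b₁ b₂ : {β : Ordinal // β ≤ α}, E (ι b₁) (ι b₂) ↔ b₁.1 < b₂.1)
    (hleave : ∀ b : {β : Ordinal // β ≤ α}, b.1 ≠ α → ∀ g : G, E (ι b) g → g ∈ A)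
    (henter : ∀ g : G, g ∉ A → ∀ b : {β : Ordinal // β ≤ α}, ¬E g (ι b))
    (hHartogs : ¬∃ f : {β : Ordinal // β < α} → {g : G // g ∉ A}, Function.Injective f)
    (h : G → G) (hh : ∀ x y, E x y → E (h x) (h y)) :
    h (ι ⟨α, le_refl α⟩) = ι ⟨α, le_refl α⟩ :=
  stmt16_general G E hirr α ι A hA hwithin hleave henter hHartogs h hh
end

section
/- Define x ∉ᵣₖ y iff x ∉ y and rank(x) < rank(y), and x <ᵣₖ y iff rank(x) < rank(y). Let N be a set of sets and h : N → N satisfy: (a) x ∈ y → h(x) ∈ h(y); (b) x ∉ᵣₖ y → h(x) ∉ᵣₖ h(y); (c) x <ᵣₖ y → h(x) <ᵣₖ h(y), for all x,y ∈ N, where N is transitive. Then h is injective on N. -/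
/-- If `h : N → N` (with `N` transitive) preserves `∈`, `∉ᵣₖ` (non-membership with smaller
rank) and `<ᵣₖ` (smaller rank), then `h` is injective on `N`. -/
theorem stmt18 (N : ZFSet) (htrans : ∀ y ∈ N, ∀ x ∈ y, x ∈ N)
    (h : ZFSet → ZFSet) (hmap : ∀ x ∈ N, h x ∈ N)
    (ha : ∀ x ∈ N, ∀ y ∈ N, x ∈ y → h x ∈ h y)
    (hb : ∀ x ∈ N, ∀ y ∈ N, (x ∉ y ∧ x.rank < y.rank) →
      (h x ∉ h y ∧ (h x).rank < (h y).rank))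
    (hc : ∀ x ∈ N, ∀ y ∈ N, x.rank < y.rank → (h x).rank < (h y).rank) :
    ∀ x ∈ N, ∀ y ∈ N, h x = h y → x = y := by
  intro x hx y hy hxy
  rcases lt_trichotomy x.rank y.rank with hr | hr | hr
  · exact absurd (hxy ▸ hc x hx y hy hr) (lt_irrefl _)
  · by_contra hne
    have : ¬ (x ⊆ y ∧ y ⊆ x) := by
      intro ⟨h1, h2⟩
      exact hne (ZFSet.ext fun a => ⟨fun ha' => h1 ha', fun ha' => h2 ha'⟩)
    rcases not_and_or.mp this with hs | hs
    · rw [ZFSet.subset_def] at hs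
      push_neg at hs
      obtain ⟨a, hax, hay⟩ := hs
      have haN := htrans x hx a hax
      have := hb a haN y hy ⟨hay, hr ▸ ZFSet.rank_lt_of_mem hax⟩
      exact this.1 (hxy ▸ ha a haN x hx hax)
    · rw [ZFSet.subset_def] at hs
      push_neg at hs
      obtain ⟨a, hay, hax⟩ := hs
      have haN := htrans y hy a hay
      have := hb a haN x hx ⟨hax, hr ▸ ZFSet.rank_lt_of_mem hay⟩
      exact this.1 (hxy ▸ ha a haN y hy hay)
  · exact absurd (hxy ▸ hc y hy x hx hr) (lt_irrefl _)
end
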